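/- arXiv:1907.05691 — 2 statements merged into one kernel-verified Lean document; each statement's English description precedes it below -/
import Mathlib

section
/- Let (X,d) be a metric space and let f_n (n ∈ ℕ⁺) and f be uniform equivalences of X such that f_n orbitally converges to f and f_n⁻¹ orbitally converges to f⁻¹. Then a point x ∈ X is a weak topologically stable point of f if and only if for every ε > 0 there exist δ > 0 and m ∈ ℕ⁺ such that δ ∈ Wts(f_n, x, ε) for all n ≥ m (i.e. ⋃_{m≥1} ⋂_{n≥m} Wts(f_n, x, ε) ≠ ∅ for every ε > 0). -/
/-- `g` is a uniform equivalence: both `g` and `g⁻¹` are uniformly continuous. -/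
def IsUniformEquiv {X : Type*} [MetricSpace X] (g : Equiv.Perm X) : Prop :=
  UniformContinuous g ∧ UniformContinuous g.symm

/-- The `C⁰`-distance `D(f,g) = sup_x min(d(f x, g x), 1)`. -/
noncomputable def C0Dist {X : Type*} [MetricSpace X] (f g : X → X) : ℝ :=
  ⨆ x : X, min (dist (f x) (g x)) 1

/-- The closure of the full `g`-orbit of `x`. -/
def OrbitClosure {X : Type*} [MetricSpace X] (g : Equiv.Perm X) (x : X) : Set X :=
  closure (Set.range fun n : ℤ => (g ^ n) x)

/-- `δ ∈ Wts(f, x, ε)`: `δ` witnesses weak topological stability of `f` at `x`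
for tolerance `ε`. -/
def WeakTopStableWitness {X : Type*} [MetricSpace X]
    (f : Equiv.Perm X) (x : X) (ε δ : ℝ) : Prop :=
  ∀ g : Equiv.Perm X, IsUniformEquiv g → C0Dist f g < δ →
    ∃ h : OrbitClosure g x → X, Continuous h ∧
      (∀ (y : OrbitClosure g x) (n : ℤ),
        dist ((f ^ n) (h y)) ((g ^ n) (y : X)) < ε) ∧
      (∀ y : OrbitClosure g x, dist (h y) (y : X) < ε)

lemma c0dist_bddAbove {X : Type*} [MetricSpace X] (f g : X → X) :
    BddAbove (Set.range fun x : X => min (dist (f x) (g x)) 1) :=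
  ⟨1, by rintro _ ⟨x, rfl⟩; exact min_le_right _ _⟩

lemma c0dist_nonneg {X : Type*} [MetricSpace X] (f g : X → X) : 0 ≤ C0Dist f g :=
  Real.iSup_nonneg fun x => le_min dist_nonneg zero_le_one

lemma c0dist_le_add {X : Type*} [MetricSpace X] (f F g : X → X) (c : ℝ)
    (hc : 0 ≤ c) (h : ∀ z, dist (f z) (F z) ≤ c) :
    C0Dist f g ≤ c + C0Dist F g := by
  apply Real.iSup_le _ (add_nonneg hc (c0dist_nonneg F g))
  intro z
  have hle : min (dist (F z) (g z)) 1 ≤ C0Dist F g :=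
    le_ciSup (c0dist_bddAbove F g) z
  rcases le_total (dist (F z) (g z)) 1 with h1 | h1
  · calc min (dist (f z) (g z)) 1 ≤ dist (f z) (g z) := min_le_left _ _
      _ ≤ dist (f z) (F z) + dist (F z) (g z) := dist_triangle _ _ _
      _ ≤ c + min (dist (F z) (g z)) 1 := by
          rw [min_eq_left h1]; exact add_le_add (h z) le_rfl
      _ ≤ c + C0Dist F g := add_le_add le_rfl hle
  · calc min (dist (f z) (g z)) 1 ≤ 1 := min_le_right _ _
      _ = 0 + min (dist (F z) (g z)) 1 := by rw [min_eq_right h1, zero_add]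
      _ ≤ c + C0Dist F g := add_le_add hc hle

lemma transfer {X : Type*} [MetricSpace X] (F f : Equiv.Perm X) (x : X) (ε δ : ℝ)
    (hε : 0 < ε) (hδ : 0 < δ)
    (hpow : ∀ z : X, ∀ k : ℤ, k ≠ 0 → dist ((F ^ k) z) ((f ^ k) z) ≤ ε / 2)
    (hpt : ∀ z : X, dist (F z) (f z) ≤ δ / 2)
    (hw : WeakTopStableWitness f x (ε / 2) δ) :
    WeakTopStableWitness F x ε (δ / 2) := by
  intro g hg hgd
  have hfg : C0Dist f g < δ := by
    have := c0dist_le_add f F g (δ / 2) (by linarith) fun z => by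
      rw [dist_comm]; exact hpt z
    linarith
  obtain ⟨h, hcont, h1, h2⟩ := hw g hg hfg
  refine ⟨h, hcont, ?_, fun y => lt_of_lt_of_le (h2 y) (by linarith)⟩
  intro y k
  rcases eq_or_ne k 0 with rfl | hk
  · simpa using lt_of_lt_of_le (h2 y) (by linarith)
  · calc dist ((F ^ k) (h y)) ((g ^ k) (y : X))
        ≤ dist ((F ^ k) (h y)) ((f ^ k) (h y)) + dist ((f ^ k) (h y)) ((g ^ k) (y : X)) :=
          dist_triangle _ _ _
      _ < ε / 2 + ε / 2 := add_lt_add_of_le_of_lt (hpow _ k hk) (h1 y k)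
      _ = ε := by ring

lemma zpow_bound {X : Type*} [MetricSpace X] (F f : Equiv.Perm X) (ε : ℝ)
    (h1 : ∀ z : X, ∀ k : ℕ, 1 ≤ k → dist ((F ^ k) z) ((f ^ k) z) < ε)
    (h2 : ∀ z : X, ∀ k : ℕ, 1 ≤ k → dist ((F⁻¹ ^ k) z) ((f⁻¹ ^ k) z) < ε) :
    ∀ z : X, ∀ k : ℤ, k ≠ 0 → dist ((F ^ k) z) ((f ^ k) z) ≤ ε := by
  intro z k hk
  rcases k with m | m
  · have hm : 1 ≤ m := by
      rcases Nat.eq_zero_or_pos m with rfl | h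
      · exact absurd rfl hk
      · exact h
    have eF : (F ^ (Int.ofNat m) : Equiv.Perm X) = F ^ m := zpow_natCast F m
    have ef : (f ^ (Int.ofNat m) : Equiv.Perm X) = f ^ m := zpow_natCast f m
    rw [eF, ef]
    exact (h1 z m hm).le
  · have eF : (F ^ (Int.negSucc m) : Equiv.Perm X) = F⁻¹ ^ (m + 1) := by
      rw [zpow_negSucc, inv_pow]
    have ef : (f ^ (Int.negSucc m) : Equiv.Perm X) = f⁻¹ ^ (m + 1) := by
      rw [zpow_negSucc, inv_pow]
    rw [eF, ef]
    exact (h2 z (m + 1) (Nat.le_add_left 1 m)).le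

/-- Orbital convergence (of the uniform equivalences and of their
inverses) and weak topologically stable points. `x` is a weak topologically stable
point of `f` iff for every `ε > 0` the set `⋃_{m≥1} ⋂_{n≥m} Wts(f_n, x, ε)` is
nonempty. -/
theorem weak_topologically_stable_point_iff_of_oc
    {X : Type*} [MetricSpace X] (F : ℕ → Equiv.Perm X) (f : Equiv.Perm X)
    (hF : ∀ n, IsUniformEquiv (F n)) (hf : IsUniformEquiv f)
    (hoc : ∀ ε : ℝ, 0 < ε → ∃ N : ℕ, 1 ≤ N ∧ ∀ n, N ≤ n → ∀ x : X, ∀ k : ℕ,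
      1 ≤ k → dist ((F n ^ k) x) ((f ^ k) x) < ε)
    (hoc' : ∀ ε : ℝ, 0 < ε → ∃ N : ℕ, 1 ≤ N ∧ ∀ n, N ≤ n → ∀ x : X, ∀ k : ℕ,
      1 ≤ k → dist (((F n)⁻¹ ^ k) x) ((f⁻¹ ^ k) x) < ε)
    (x : X) :
    (∀ ε : ℝ, 0 < ε → ∃ δ : ℝ, 0 < δ ∧ WeakTopStableWitness f x ε δ) ↔
    (∀ ε : ℝ, 0 < ε → ∃ δ : ℝ, 0 < δ ∧ ∃ m : ℕ, 1 ≤ m ∧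
        ∀ n, m ≤ n → WeakTopStableWitness (F n) x ε δ) := by
  constructor
  · intro hyp ε hε
    obtain ⟨δ, hδ, hw⟩ := hyp (ε / 2) (by linarith)
    obtain ⟨N₁, hN₁, h₁⟩ := hoc (ε / 2) (by linarith)
    obtain ⟨N₂, hN₂, h₂⟩ := hoc' (ε / 2) (by linarith)
    obtain ⟨N₃, hN₃, h₃⟩ := hoc (δ / 2) (by linarith)
    refine ⟨δ / 2, by linarith, max N₁ (max N₂ N₃), le_trans hN₁ (le_max_left _ _), ?_⟩
    intro n hn
    have hn₁ : N₁ ≤ n := le_trans (le_max_left _ _) hn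
    have hn₂ : N₂ ≤ n := le_trans (le_trans (le_max_left _ _) (le_max_right _ _)) hn
    have hn₃ : N₃ ≤ n := le_trans (le_trans (le_max_right _ _) (le_max_right _ _)) hn
    refine transfer (F n) f x ε δ hε hδ
      (zpow_bound (F n) f (ε / 2) (h₁ n hn₁) (h₂ n hn₂)) ?_ hw
    intro z
    have := h₃ n hn₃ z 1 le_rfl
    simpa using this.le
  · intro hyp ε hε
    obtain ⟨δ, hδ, m, hm, hw⟩ := hyp (ε / 2) (by linarith)
    obtain ⟨N₁, hN₁, h₁⟩ := hoc (ε / 2) (by linarith)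
    obtain ⟨N₂, hN₂, h₂⟩ := hoc' (ε / 2) (by linarith)
    obtain ⟨N₃, hN₃, h₃⟩ := hoc (δ / 2) (by linarith)
    set n := max m (max N₁ (max N₂ N₃)) with hn
    have hnm : m ≤ n := le_max_left _ _
    have hn₁ : N₁ ≤ n := le_trans (le_max_left _ _) (le_max_right _ _)
    have hn₂ : N₂ ≤ n :=
      le_trans (le_trans (le_max_left _ _) (le_max_right _ _)) (le_max_right _ _)
    have hn₃ : N₃ ≤ n :=
      le_trans (le_trans (le_max_right _ _) (le_max_right _ _)) (le_max_right _ _)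
    refine ⟨δ / 2, by linarith, ?_⟩
    have hpow := zpow_bound (F n) f (ε / 2) (h₁ n hn₁) (h₂ n hn₂)
    refine transfer f (F n) x ε δ hε hδ ?_ ?_ (hw n hnm)
    · intro z k hk
      rw [dist_comm]; exact hpow z k hk
    · intro z
      have := h₃ n hn₃ z 1 le_rfl
      rw [dist_comm]
      simpa using this.le
end

section
/- Let (X,d) be a Mandelkern locally compact metric space (every closed ball of finite radius in X is compact) and let f_n (n ∈ ℕ⁺) and f be uniform equivalences of X such that f_n orbitally converges to f, f_n⁻¹ orbitally converges to f⁻¹, and f is expansive. Then a point x ∈ X is a topologically stable point of f if and only if for every ε > 0 there exist δ > 0 and m ∈ ℕ⁺ such that δ ∈ Wts(f_n, x, ε) for all n ≥ m (i.e. ⋃_{m≥1} ⋂_{n≥m} Wts(f_n, x, ε) ≠ ∅ for every ε > 0). -/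
/-!
Orbital convergence of `f_n → f` and `f_n⁻¹ → f⁻¹` makes `f_n^k` uniformly close to `f^k` for
all `k ∈ ℤ` at once, for large `n`. Hence a semiconjugacy `h` between `f` and a perturbation `g`
is a weak semiconjugacy for `f_n`, and conversely a weak semiconjugacy for `f_n` is one for `f`
up to a small error, so that the `f`-orbit of `h y` shadows the `g`-orbit of `y`. Then the
`f`-orbits of `f (h y)` and `h (g y)` stay close to the same `g`-orbit, and expansivity of `f`
forces `f (h y) = h (g y)`.
-/

open Metric

/-- `x` is a topologically stable point of `f`. -/
def IsTopStablePt {X : Type*} [MetricSpace X] (f : Equiv.Perm X) (x : X) : Prop :=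
  ∀ ε : ℝ, 0 < ε → ∃ δ : ℝ, 0 < δ ∧
    ∀ g : Equiv.Perm X, IsUniformEquiv g → C0Dist f g < δ →
      ∃ h : OrbitClosure g x → X, Continuous h ∧
        (∀ (y : X) (hy : y ∈ OrbitClosure g x) (hgy : g y ∈ OrbitClosure g x),
          f (h ⟨y, hy⟩) = h ⟨g y, hgy⟩) ∧
        (∀ y : OrbitClosure g x, dist (h y) (y : X) < ε)

open Filter

theorem zpow_apply_eq_of_semiconj {α β : Type*} {f : Equiv.Perm β} {g : Equiv.Perm α}
    {S : Set α} (hS : ∀ k : ℤ, ∀ y ∈ S, (g ^ k) y ∈ S) (h : S → β)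
    (hconj : ∀ (y : α) (hy : y ∈ S) (hgy : g y ∈ S), f (h ⟨y, hy⟩) = h ⟨g y, hgy⟩)
    (k : ℤ) (y : S) : (f ^ k) (h y) = h ⟨(g ^ k) y, hS k y y.2⟩ := by
  induction k using Int.induction_on generalizing y with
  | zero => simp
  | succ k ih =>
    have hgy : g y ∈ S := by simpa using hS 1 y y.2
    rw [zpow_add_one, Equiv.Perm.mul_apply, hconj y y.2 hgy, ih]
    simp only [zpow_add_one, Equiv.Perm.mul_apply]
  | pred k ih =>
    have hg'y : g⁻¹ y ∈ S := by simpa using hS (-1) y y.2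
    have hinv : f⁻¹ (h y) = h ⟨g⁻¹ y, hg'y⟩ := by
      rw [Equiv.Perm.inv_eq_iff_eq, hconj _ hg'y (by simp)]
      simp
    rw [zpow_sub_one, Equiv.Perm.mul_apply, hinv, ih]
    simp only [zpow_sub_one, Equiv.Perm.mul_apply]

section

variable {X : Type*} [MetricSpace X]

/-- `IsTopStablePt f x` unfolds to `∀ ε > 0, ∃ δ > 0, TopStableWitness f x ε δ`. -/
def TopStableWitness (f : Equiv.Perm X) (x : X) (ε δ : ℝ) : Prop :=
  ∀ g : Equiv.Perm X, IsUniformEquiv g → C0Dist f g < δ →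
    ∃ h : OrbitClosure g x → X, Continuous h ∧
      (∀ (y : X) (hy : y ∈ OrbitClosure g x) (hgy : g y ∈ OrbitClosure g x),
        f (h ⟨y, hy⟩) = h ⟨g y, hgy⟩) ∧
      (∀ y : OrbitClosure g x, dist (h y) (y : X) < ε)

def ExpansiveWith (f : Equiv.Perm X) (c : ℝ) : Prop :=
  ∀ x y : X, x ≠ y → ∃ n : ℤ, c < dist ((f ^ n) x) ((f ^ n) y)

theorem C0Dist_nonneg (f g : X → X) : 0 ≤ C0Dist f g :=
  Real.iSup_nonneg fun _ => le_min dist_nonneg zero_le_one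

theorem C0Dist_le_add {f F : X → X} (g : X → X) {a : ℝ} (ha : 0 ≤ a)
    (hfF : ∀ z, dist (f z) (F z) ≤ a) : C0Dist f g ≤ a + C0Dist F g := by
  refine Real.iSup_le (fun z => ?_) (add_nonneg ha (C0Dist_nonneg F g))
  have hFg : min (dist (F z) (g z)) 1 ≤ C0Dist F g :=
    le_ciSup (f := fun z => min (dist (F z) (g z)) 1)
      ⟨1, by rintro _ ⟨w, rfl⟩; exact min_le_right _ _⟩ z
  calc min (dist (f z) (g z)) 1
      ≤ min (a + dist (F z) (g z)) (a + 1) :=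
        min_le_min ((dist_triangle _ _ _).trans (add_le_add_left (hfF z) _)) (by linarith)
    _ = a + min (dist (F z) (g z)) 1 := min_add_add_left _ _ _
    _ ≤ a + C0Dist F g := (add_le_add_iff_left a).2 hFg

theorem IsUniformEquiv.continuous_zpow {g : Equiv.Perm X} (hg : IsUniformEquiv g) (k : ℤ) :
    Continuous ⇑(g ^ k) := by
  obtain ⟨j, rfl | rfl⟩ := Int.eq_nat_or_neg k
  · rw [zpow_natCast, Equiv.Perm.coe_pow]
    exact hg.1.continuous.iterate j
  · rw [zpow_neg, zpow_natCast, ← inv_pow, Equiv.Perm.coe_pow, Equiv.Perm.inv_def]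
    exact hg.2.continuous.iterate j

theorem IsUniformEquiv.zpow_mem_orbitClosure {g : Equiv.Perm X} (hg : IsUniformEquiv g)
    {x y : X} (hy : y ∈ OrbitClosure g x) (k : ℤ) : (g ^ k) y ∈ OrbitClosure g x := by
  refine map_mem_closure (hg.continuous_zpow k) hy ?_
  rintro _ ⟨n, rfl⟩
  exact ⟨k + n, by simp [zpow_add, Equiv.Perm.mul_apply]⟩

theorem dist_zpow_lt_of_pow {F f : Equiv.Perm X} {η : ℝ} (hη : 0 < η)
    (hpos : ∀ z : X, ∀ j : ℕ, 1 ≤ j → dist ((F ^ j) z) ((f ^ j) z) < η)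
    (hneg : ∀ z : X, ∀ j : ℕ, 1 ≤ j → dist ((F⁻¹ ^ j) z) ((f⁻¹ ^ j) z) < η)
    (z : X) (k : ℤ) : dist ((F ^ k) z) ((f ^ k) z) < η := by
  obtain ⟨j, rfl | rfl⟩ := Int.eq_nat_or_neg k
  · rcases Nat.eq_zero_or_pos j with rfl | hj
    · simpa using hη
    · simpa using hpos z j hj
  · rcases Nat.eq_zero_or_pos j with rfl | hj
    · simpa using hη
    · simpa [zpow_neg, ← inv_pow] using hneg z j hj

theorem eventually_dist_zpow_lt {F : ℕ → Equiv.Perm X} {f : Equiv.Perm X}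
    (hoc : ∀ ε : ℝ, 0 < ε → ∃ N : ℕ, 1 ≤ N ∧ ∀ n, N ≤ n → ∀ x : X, ∀ k : ℕ,
      1 ≤ k → dist ((F n ^ k) x) ((f ^ k) x) < ε)
    (hoc' : ∀ ε : ℝ, 0 < ε → ∃ N : ℕ, 1 ≤ N ∧ ∀ n, N ≤ n → ∀ x : X, ∀ k : ℕ,
      1 ≤ k → dist (((F n)⁻¹ ^ k) x) ((f⁻¹ ^ k) x) < ε)
    {η : ℝ} (hη : 0 < η) :
    ∀ᶠ n in atTop, ∀ (z : X) (k : ℤ), dist ((F n ^ k) z) ((f ^ k) z) < η := by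
  obtain ⟨N, -, hN⟩ := hoc η hη
  obtain ⟨N', -, hN'⟩ := hoc' η hη
  filter_upwards [eventually_ge_atTop N, eventually_ge_atTop N'] with n hn hn'
  exact dist_zpow_lt_of_pow hη (hN n hn) (hN' n hn')

theorem ExpansiveWith.eq_of_forall_dist_le {f : Equiv.Perm X} {c : ℝ} (hf : ExpansiveWith f c)
    {a b : X} (hab : ∀ n : ℤ, dist ((f ^ n) a) ((f ^ n) b) ≤ c) : a = b := by
  by_contra hne
  obtain ⟨n, hn⟩ := hf a b hne
  exact (hab n).not_gt hn

theorem ExpansiveWith.semiconj_of_shadowing {f g : Equiv.Perm X} {c : ℝ}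
    (hf : ExpansiveWith f c) {S : Set X} (h : S → X)
    (hshadow : ∀ (y : S) (k : ℤ), dist ((f ^ k) (h y)) ((g ^ k) y) < c / 2)
    (y : X) (hy : y ∈ S) (hgy : g y ∈ S) : f (h ⟨y, hy⟩) = h ⟨g y, hgy⟩ := by
  refine hf.eq_of_forall_dist_le fun n => ?_
  have hstep : ∀ (e : Equiv.Perm X) (z : X), (e ^ n) (e z) = (e ^ (n + 1)) z := fun e z => by
    rw [zpow_add_one, Equiv.Perm.mul_apply]
  calc dist ((f ^ n) (f (h ⟨y, hy⟩))) ((f ^ n) (h ⟨g y, hgy⟩))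
      ≤ dist ((f ^ n) (f (h ⟨y, hy⟩))) ((g ^ n) (g y))
        + dist ((f ^ n) (h ⟨g y, hgy⟩)) ((g ^ n) (g y)) := dist_triangle_right _ _ _
    _ ≤ c / 2 + c / 2 := by
      gcongr
      · rw [hstep, hstep]
        exact (hshadow ⟨y, hy⟩ (n + 1)).le
      · exact (hshadow ⟨g y, hgy⟩ n).le
    _ = c := add_halves c

theorem TopStableWitness.weakTopStableWitness {F f : Equiv.Perm X} {x : X}
    {ε δ η ε' δ' : ℝ} (hw : TopStableWitness f x ε δ) (hη : 0 ≤ η)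
    (hFf : ∀ (z : X) (k : ℤ), dist ((F ^ k) z) ((f ^ k) z) < η)
    (hε : ε + η ≤ ε') (hδ : δ' + η ≤ δ) : WeakTopStableWitness F x ε' δ' := by
  intro g hg hFg
  have hfF : ∀ z, dist (f z) (F z) ≤ η := fun z => by
    simpa [dist_comm] using (hFf z 1).le
  have hfg : C0Dist f g < δ := by linarith [C0Dist_le_add g hη hfF]
  obtain ⟨h, hcont, hconj, hclose⟩ := hw g hg hfg
  have hsemi := zpow_apply_eq_of_semiconj (fun k _ hy => hg.zpow_mem_orbitClosure hy k) h hconj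
  refine ⟨h, hcont, fun y k => ?_, fun y => by linarith [hclose y]⟩
  calc dist ((F ^ k) (h y)) ((g ^ k) y)
      ≤ dist ((F ^ k) (h y)) ((f ^ k) (h y)) + dist ((f ^ k) (h y)) ((g ^ k) y) :=
        dist_triangle _ _ _
    _ < η + ε := add_lt_add (hFf _ k) (by rw [hsemi]; exact hclose _)
    _ ≤ ε' := by linarith

theorem WeakTopStableWitness.topStableWitness {F f : Equiv.Perm X} {x : X} {c : ℝ}
    {ε δ η ε' δ' : ℝ} (hw : WeakTopStableWitness F x ε δ) (hf : ExpansiveWith f c)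
    (hη : 0 ≤ η) (hFf : ∀ (z : X) (k : ℤ), dist ((F ^ k) z) ((f ^ k) z) < η)
    (hc : 2 * (ε + η) ≤ c) (hε : ε ≤ ε') (hδ : δ' + η ≤ δ) : TopStableWitness f x ε' δ' := by
  intro g hg hfg
  have hFf₁ : ∀ z, dist (F z) (f z) ≤ η := fun z => by simpa using (hFf z 1).le
  have hFg : C0Dist F g < δ := by linarith [C0Dist_le_add g hη hFf₁]
  obtain ⟨h, hcont, hweak, hclose⟩ := hw g hg hFg
  have hshadow : ∀ (y : OrbitClosure g x) (k : ℤ), dist ((f ^ k) (h y)) ((g ^ k) y) < c / 2 :=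
    fun y k => by
      have := dist_triangle_left ((f ^ k) (h y)) ((g ^ k) y) ((F ^ k) (h y))
      linarith [hFf (h y) k, hweak y k]
  exact ⟨h, hcont, hf.semiconj_of_shadowing h hshadow, fun y => (hclose y).trans_le hε⟩

end

theorem topologically_stable_point_iff_of_oc_general
    {X : Type*} [MetricSpace X]
    (F : ℕ → Equiv.Perm X) (f : Equiv.Perm X)
    (hoc : ∀ ε : ℝ, 0 < ε → ∃ N : ℕ, 1 ≤ N ∧ ∀ n, N ≤ n → ∀ x : X, ∀ k : ℕ,
      1 ≤ k → dist ((F n ^ k) x) ((f ^ k) x) < ε)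
    (hoc' : ∀ ε : ℝ, 0 < ε → ∃ N : ℕ, 1 ≤ N ∧ ∀ n, N ≤ n → ∀ x : X, ∀ k : ℕ,
      1 ≤ k → dist (((F n)⁻¹ ^ k) x) ((f⁻¹ ^ k) x) < ε)
    (hexp : ∃ c : ℝ, 0 < c ∧ ∀ x y : X, x ≠ y →
      ∃ n : ℤ, c < dist ((f ^ n) x) ((f ^ n) y))
    (x : X) :
    IsTopStablePt f x ↔
    (∀ ε : ℝ, 0 < ε → ∃ δ : ℝ, 0 < δ ∧ ∃ m : ℕ, 1 ≤ m ∧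
        ∀ n, m ≤ n → WeakTopStableWitness (F n) x ε δ) := by
  obtain ⟨c, hc, hexp⟩ := hexp
  constructor
  · intro hts ε hε
    obtain ⟨δ, hδ, hw⟩ := hts (ε / 2) (half_pos hε)
    have hη : 0 < min (δ / 2) (ε / 2) := lt_min (half_pos hδ) (half_pos hε)
    obtain ⟨m, hm⟩ := eventually_atTop.1 (eventually_dist_zpow_lt hoc hoc' hη)
    refine ⟨δ / 2, half_pos hδ, max m 1, le_max_right _ _, fun n hn => ?_⟩
    exact TopStableWitness.weakTopStableWitness hw hη.le (hm n (le_of_max_le_left hn))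
      (by linarith [min_le_right (δ / 2) (ε / 2)]) (by linarith [min_le_left (δ / 2) (ε / 2)])
  · intro hw ε hε
    have hε' : 0 < min ε (c / 4) := lt_min hε (by positivity)
    obtain ⟨δ, hδ, m, -, hm⟩ := hw _ hε'
    have hη : 0 < min (δ / 2) (c / 4) := lt_min (half_pos hδ) (by positivity)
    obtain ⟨n, hFf, hn⟩ :=
      ((eventually_dist_zpow_lt hoc hoc' hη).and (eventually_ge_atTop m)).exists
    refine ⟨δ / 2, half_pos hδ, (hm n hn).topStableWitness hexp hη.le hFf ?_ (min_le_left _ _)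
      (by linarith [min_le_left (δ / 2) (c / 4)])⟩
    linarith [min_le_right ε (c / 4), min_le_right (δ / 2) (c / 4)]

/-- On a Mandelkern locally compact metric space, for an expansive limit
`f` of uniform equivalences `f_n` with `f_n → f` and `f_n⁻¹ → f⁻¹` orbitally,
`x` is a topologically stable point of `f` iff for every `ε > 0` the set
`⋃_{m≥1} ⋂_{n≥m} Wts(f_n, x, ε)` is nonempty. -/
theorem topologically_stable_point_iff_of_oc
    {X : Type*} [MetricSpace X]
    (hX : ∀ (x : X) (r : ℝ), IsCompact (closedBall x r))
    (F : ℕ → Equiv.Perm X) (f : Equiv.Perm X)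
    (hF : ∀ n, IsUniformEquiv (F n)) (hf : IsUniformEquiv f)
    (hoc : ∀ ε : ℝ, 0 < ε → ∃ N : ℕ, 1 ≤ N ∧ ∀ n, N ≤ n → ∀ x : X, ∀ k : ℕ,
      1 ≤ k → dist ((F n ^ k) x) ((f ^ k) x) < ε)
    (hoc' : ∀ ε : ℝ, 0 < ε → ∃ N : ℕ, 1 ≤ N ∧ ∀ n, N ≤ n → ∀ x : X, ∀ k : ℕ,
      1 ≤ k → dist (((F n)⁻¹ ^ k) x) ((f⁻¹ ^ k) x) < ε)
    (hexp : ∃ c : ℝ, 0 < c ∧ ∀ x y : X, x ≠ y →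
      ∃ n : ℤ, c < dist ((f ^ n) x) ((f ^ n) y))
    (x : X) :
    IsTopStablePt f x ↔
    (∀ ε : ℝ, 0 < ε → ∃ δ : ℝ, 0 < δ ∧ ∃ m : ℕ, 1 ≤ m ∧
        ∀ n, m ≤ n → WeakTopStableWitness (F n) x ε δ) :=
  topologically_stable_point_iff_of_oc_general F f hoc hoc' hexp x
end
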